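/- arXiv:2210.04536 — 3 statements merged into one kernel-verified Lean document; each statement's English description precedes it below -/
import Mathlib

section
/- Let H be a real inner product space, N ≥ 1 a natural number, θ > 0 and λ, Λ > 0. For each n ∈ {1,…,N} let aₙ : H × H → ℝ be a symmetric bilinear form satisfying λ‖v‖² ≤ aₙ(v,v) ≤ Λ‖v‖² for all v ∈ H. Let Φ ∈ H and let e₀, e₁, …, e_N ∈ H satisfy e₀ = 0 and, for every n ∈ {1,…,N}, ⟨eₙ − eₙ₋₁, eₙ⟩ + θ·aₙ(eₙ, eₙ) + θ·aₙ(Φ, eₙ) = 0. Then θ·∑_{n=1}^{N} ‖eₙ‖² ≤ (Λ/λ)·(Nθ)·‖Φ‖². -/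
open scoped RealInnerProductSpace

lemma telescope_Icc (g : ℕ → ℝ) (N : ℕ) :
    ∑ n ∈ Finset.Icc 1 N, (g n - g (n - 1)) = g N - g 0 := by
  induction N with
  | zero => simp
  | succ M ih =>
      rw [Finset.sum_Icc_succ_top (by omega : 1 ≤ M + 1), ih]
      simp only [Nat.add_sub_cancel]
      ring

/-- Abstract Hilbert-space core of Lemma 4.1 (discrete energy stability estimate). -/
theorem stmt0 {H : Type*} [NormedAddCommGroup H] [InnerProductSpace ℝ H]
    (N : ℕ) (hN : 1 ≤ N) (θ lam Lam : ℝ) (hθ : 0 < θ) (hlam : 0 < lam) (hLam : 0 < Lam)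
    (a : ℕ → H →ₗ[ℝ] H →ₗ[ℝ] ℝ)
    (hsymm : ∀ n ∈ Finset.Icc 1 N, ∀ u v : H, a n u v = a n v u)
    (hbound : ∀ n ∈ Finset.Icc 1 N, ∀ v : H,
      lam * ‖v‖ ^ 2 ≤ a n v v ∧ a n v v ≤ Lam * ‖v‖ ^ 2)
    (Φ : H) (e : ℕ → H) (he0 : e 0 = 0)
    (hscheme : ∀ n ∈ Finset.Icc 1 N,
      ⟪e n - e (n - 1), e n⟫ + θ * a n (e n) (e n) + θ * a n Φ (e n) = 0) :
    θ * ∑ n ∈ Finset.Icc 1 N, ‖e n‖ ^ 2 ≤ (Lam / lam) * (N * θ) * ‖Φ‖ ^ 2 := by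
  set g : ℕ → ℝ := fun n => ‖e n‖ ^ 2 with hg
  have key : ∀ n ∈ Finset.Icc 1 N,
      g n - g (n - 1) + θ * lam * g n ≤ θ * Lam * ‖Φ‖ ^ 2 := by
    intro n hn
    have hs := hscheme n hn
    have hb1 := (hbound n hn (e n)).1
    have hb2 := (hbound n hn Φ).2
    have hpos : (0:ℝ) ≤ a n (e n + Φ) (e n + Φ) :=
      le_trans (by positivity) ((hbound n hn _).1)
    have hexp : a n (e n + Φ) (e n + Φ)
        = a n (e n) (e n) + 2 * a n Φ (e n) + a n Φ Φ := by
      simp only [map_add, LinearMap.add_apply]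
      rw [hsymm n hn (e n) Φ]; ring
    have h0 : (0:ℝ) ≤ θ * (a n (e n) (e n) + 2 * a n Φ (e n) + a n Φ Φ) := by
      rw [← hexp]; exact mul_nonneg hθ.le hpos
    have hinner : ‖e n‖ ^ 2 - ‖e (n-1)‖ * ‖e n‖ ≤ ⟪e n - e (n-1), e n⟫ := by
      rw [inner_sub_left, real_inner_self_eq_norm_sq]
      have := real_inner_le_norm (e (n-1)) (e n)
      linarith
    have hprod : ‖e (n-1)‖ * ‖e n‖ ≤ (‖e (n-1)‖ ^ 2 + ‖e n‖ ^ 2) / 2 := by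
      nlinarith [sq_nonneg (‖e (n-1)‖ - ‖e n‖)]
    have h1 : θ * (lam * ‖e n‖ ^ 2) ≤ θ * a n (e n) (e n) :=
      mul_le_mul_of_nonneg_left hb1 hθ.le
    have h2 : θ * a n Φ Φ ≤ θ * (Lam * ‖Φ‖ ^ 2) :=
      mul_le_mul_of_nonneg_left hb2 hθ.le
    simp only [hg]
    nlinarith [hs, h0, hinner, hprod, h1, h2]
  have hsum := Finset.sum_le_sum key
  have htel : ∑ n ∈ Finset.Icc 1 N, (g n - g (n - 1)) = g N - g 0 :=
    telescope_Icc g N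
  rw [Finset.sum_add_distrib, htel, ← Finset.mul_sum, Finset.sum_const, Nat.card_Icc,
    Nat.add_sub_cancel, nsmul_eq_mul] at hsum
  have hg0 : g 0 = 0 := by simp [hg, he0]
  have hgN : 0 ≤ g N := by positivity
  rw [div_mul_eq_mul_div, div_mul_eq_mul_div, le_div_iff₀ hlam]
  nlinarith [hsum, hg0, hgN]
end

section
/- Let H be a real inner product space, N ≥ 1 a natural number, θ > 0, Λ > 0 and C₁ ≥ 0. For each k ∈ {0,…,N} let a_k : H × H → ℝ be a bilinear form with |a_k(u,v)| ≤ Λ‖u‖‖v‖ for all u, v ∈ H. Let Φ ∈ H, let e₀, …, e_N ∈ H satisfy θ·∑_{k=0}^{N} ‖e_k‖² ≤ C₁²·(Nθ)·‖Φ‖², and set φ_k = Φ + e_k. Then for every Ψ ∈ H, (1/(Nθ))·| (θ/2)·a₀(Ψ,φ₀) + θ·∑_{k=1}^{N−1} a_k(Ψ,φ_k) + (θ/2)·a_N(Ψ,φ_N) | ≤ Λ·(1 + C₁)·‖Ψ‖·‖Φ‖. -/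
/-- Abstract core of the boundedness part of Lemma 4.2: the trapezoidal-rule average
(weights θ/2, θ, …, θ, θ/2) of bounded forms evaluated at φ_k = Φ + e_k, where the
e_k satisfy the ℓ²-stability bound of Lemma 4.1. -/
theorem stmt3 {H : Type*} [NormedAddCommGroup H] [InnerProductSpace ℝ H]
    (N : ℕ) (hN : 1 ≤ N) (θ Lam C₁ : ℝ) (hθ : 0 < θ) (hLam : 0 < Lam) (hC₁ : 0 ≤ C₁)
    (a : ℕ → H →ₗ[ℝ] H →ₗ[ℝ] ℝ)
    (hbdd : ∀ k ≤ N, ∀ u v : H, |a k u v| ≤ Lam * ‖u‖ * ‖v‖)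
    (Φ : H) (e : ℕ → H)
    (he : θ * ∑ k ∈ Finset.Icc 0 N, ‖e k‖ ^ 2 ≤ C₁ ^ 2 * (N * θ) * ‖Φ‖ ^ 2)
    (φ : ℕ → H) (hφ : ∀ k, φ k = Φ + e k) :
    ∀ Ψ : H, (1 / (N * θ)) *
      |θ / 2 * a 0 Ψ (φ 0) + θ * ∑ k ∈ Finset.Ico 1 N, a k Ψ (φ k)
        + θ / 2 * a N Ψ (φ N)| ≤ Lam * (1 + C₁) * ‖Ψ‖ * ‖Φ‖ := by
  intro Ψ
  have hNpos : (0:ℝ) < N := by exact_mod_cast hN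
  have hNθ : (0:ℝ) < N * θ := by positivity
  set w : ℕ → ℝ := fun k => if k = 0 ∨ k = N then θ / 2 else θ with hw
  have hw_nonneg : ∀ k, 0 ≤ w k := by
    intro k; by_cases h : k = 0 ∨ k = N <;> simp [hw, h] <;> linarith
  have hw_le : ∀ k, w k ≤ θ := by
    intro k; by_cases h : k = 0 ∨ k = N <;> simp [hw, h] <;> linarith
  have hIcc : Finset.Icc 0 N = insert 0 (insert N (Finset.Ico 1 N)) := by
    ext k; simp [Finset.mem_Icc, Finset.mem_Ico]; omega
  have h0notin : (0:ℕ) ∉ insert N (Finset.Ico 1 N) := by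
    simp [Finset.mem_Ico]; omega
  have hNnotin : N ∉ Finset.Ico 1 N := by simp
  have hsplit : ∀ f : ℕ → ℝ, ∑ k ∈ Finset.Icc 0 N, w k * f k
      = θ / 2 * f 0 + θ * ∑ k ∈ Finset.Ico 1 N, f k + θ / 2 * f N := by
    intro f
    rw [hIcc, Finset.sum_insert h0notin, Finset.sum_insert hNnotin]
    have h1 : ∑ k ∈ Finset.Ico 1 N, w k * f k = θ * ∑ k ∈ Finset.Ico 1 N, f k := by
      rw [Finset.mul_sum]
      refine Finset.sum_congr rfl fun k hk => ?_
      simp only [Finset.mem_Ico] at hk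
      have : ¬ (k = 0 ∨ k = N) := by omega
      simp [hw, this]
    have hw0 : w 0 = θ / 2 := by simp [hw]
    have hwN : w N = θ / 2 := by simp [hw]
    rw [h1, hw0, hwN]; ring
  have hsum_w : ∑ k ∈ Finset.Icc 0 N, w k = N * θ := by
    have := hsplit (fun _ => 1)
    simp only [mul_one, Finset.sum_const, Nat.card_Ico, nsmul_eq_mul] at this
    rw [this]
    have : ((N - 1 : ℕ) : ℝ) = (N : ℝ) - 1 := by
      have : 1 ≤ N := hN
      push_cast [this]; ring
    rw [this]; ring
  -- rewrite the expression as a weighted sum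
  have hexpr : θ / 2 * a 0 Ψ (φ 0) + θ * ∑ k ∈ Finset.Ico 1 N, a k Ψ (φ k)
        + θ / 2 * a N Ψ (φ N) = ∑ k ∈ Finset.Icc 0 N, w k * a k Ψ (φ k) :=
    (hsplit (fun k => a k Ψ (φ k))).symm
  -- termwise bound
  have hterm : ∀ k ∈ Finset.Icc 0 N,
      |w k * a k Ψ (φ k)| ≤ w k * (Lam * ‖Ψ‖ * (‖Φ‖ + ‖e k‖)) := by
    intro k hk
    simp only [Finset.mem_Icc] at hk
    rw [abs_mul, abs_of_nonneg (hw_nonneg k)]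
    refine mul_le_mul_of_nonneg_left ?_ (hw_nonneg k)
    calc |a k Ψ (φ k)| ≤ Lam * ‖Ψ‖ * ‖φ k‖ := hbdd k hk.2 Ψ (φ k)
      _ ≤ Lam * ‖Ψ‖ * (‖Φ‖ + ‖e k‖) := by
          refine mul_le_mul_of_nonneg_left ?_ (by positivity)
          rw [hφ k]; exact norm_add_le _ _
  -- bound on E = ∑ w k * ‖e k‖
  set E : ℝ := ∑ k ∈ Finset.Icc 0 N, w k * ‖e k‖ with hE
  have hE_nonneg : 0 ≤ E :=
    Finset.sum_nonneg fun k _ => mul_nonneg (hw_nonneg k) (norm_nonneg _)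
  have hE_le : E ≤ C₁ * (N * θ) * ‖Φ‖ := by
    have hcs : E ^ 2 ≤ (∑ k ∈ Finset.Icc 0 N, w k) *
        ∑ k ∈ Finset.Icc 0 N, w k * ‖e k‖ ^ 2 := by
      have h := Finset.sum_mul_sq_le_sq_mul_sq (Finset.Icc 0 N)
        (fun k => Real.sqrt (w k)) (fun k => Real.sqrt (w k) * ‖e k‖)
      have h1 : ∀ k ∈ Finset.Icc 0 N,
          Real.sqrt (w k) * (Real.sqrt (w k) * ‖e k‖) = w k * ‖e k‖ := by
        intro k _; rw [← mul_assoc, Real.mul_self_sqrt (hw_nonneg k)]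
      have h2 : ∀ k ∈ Finset.Icc 0 N, Real.sqrt (w k) ^ 2 = w k := by
        intro k _; exact Real.sq_sqrt (hw_nonneg k)
      have h3 : ∀ k ∈ Finset.Icc 0 N,
          (Real.sqrt (w k) * ‖e k‖) ^ 2 = w k * ‖e k‖ ^ 2 := by
        intro k _; rw [mul_pow, Real.sq_sqrt (hw_nonneg k)]
      rw [Finset.sum_congr rfl h1, Finset.sum_congr rfl h2, Finset.sum_congr rfl h3] at h
      exact h
    have hsum2 : ∑ k ∈ Finset.Icc 0 N, w k * ‖e k‖ ^ 2
        ≤ C₁ ^ 2 * (N * θ) * ‖Φ‖ ^ 2 := by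
      refine le_trans ?_ he
      rw [Finset.mul_sum]
      exact Finset.sum_le_sum fun k _ =>
        mul_le_mul_of_nonneg_right (hw_le k) (sq_nonneg _)
    have hsq : E ^ 2 ≤ (C₁ * (N * θ) * ‖Φ‖) ^ 2 := by
      calc E ^ 2 ≤ (N * θ) * (C₁ ^ 2 * (N * θ) * ‖Φ‖ ^ 2) := by
            rw [hsum_w] at hcs
            exact hcs.trans (mul_le_mul_of_nonneg_left hsum2 hNθ.le)
        _ = (C₁ * (N * θ) * ‖Φ‖) ^ 2 := by ring
    have := Real.sqrt_le_sqrt hsq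
    rwa [Real.sqrt_sq hE_nonneg, Real.sqrt_sq (by positivity)] at this
  -- put everything together
  have habs : |θ / 2 * a 0 Ψ (φ 0) + θ * ∑ k ∈ Finset.Ico 1 N, a k Ψ (φ k)
        + θ / 2 * a N Ψ (φ N)| ≤ Lam * ‖Ψ‖ * ((N * θ) * ‖Φ‖ + E) := by
    rw [hexpr]
    calc |∑ k ∈ Finset.Icc 0 N, w k * a k Ψ (φ k)|
        ≤ ∑ k ∈ Finset.Icc 0 N, |w k * a k Ψ (φ k)| := Finset.abs_sum_le_sum_abs _ _
      _ ≤ ∑ k ∈ Finset.Icc 0 N, w k * (Lam * ‖Ψ‖ * (‖Φ‖ + ‖e k‖)) :=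
          Finset.sum_le_sum hterm
      _ = Lam * ‖Ψ‖ * ((N * θ) * ‖Φ‖ + E) := by
          have : ∀ k, w k * (Lam * ‖Ψ‖ * (‖Φ‖ + ‖e k‖))
              = Lam * ‖Ψ‖ * (w k * ‖Φ‖ + w k * ‖e k‖) := fun k => by ring
          simp_rw [this]
          rw [← Finset.mul_sum, Finset.sum_add_distrib, ← Finset.sum_mul, hsum_w, hE]
  have hfinal : |θ / 2 * a 0 Ψ (φ 0) + θ * ∑ k ∈ Finset.Ico 1 N, a k Ψ (φ k)
        + θ / 2 * a N Ψ (φ N)| ≤ Lam * ‖Ψ‖ * ((N * θ) * ‖Φ‖ + C₁ * (N * θ) * ‖Φ‖) := by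
    refine habs.trans ?_
    refine mul_le_mul_of_nonneg_left ?_ (by positivity)
    linarith
  calc (1 / (N * θ)) * |θ / 2 * a 0 Ψ (φ 0) + θ * ∑ k ∈ Finset.Ico 1 N, a k Ψ (φ k)
        + θ / 2 * a N Ψ (φ N)|
      ≤ (1 / (N * θ)) * (Lam * ‖Ψ‖ * ((N * θ) * ‖Φ‖ + C₁ * (N * θ) * ‖Φ‖)) :=
        mul_le_mul_of_nonneg_left hfinal (by positivity)
    _ = Lam * (1 + C₁) * ‖Ψ‖ * ‖Φ‖ := by field_simp
end

section
/- Let V be a real vector space equipped with two inner products ⟨·,·⟩₀ (norm ‖·‖₀) and ⟨·,·⟩₁ (norm ‖·‖₁). Let τ > 0, N ≥ 1, λ > 0, e ≥ 0. For each n ∈ {1,…,N} let Bₙ, B̃ₙ : V × V → ℝ be bilinear forms such that Bₙ(v,v) ≥ λ‖v‖₁² and |Bₙ(u,v) − B̃ₙ(u,v)| ≤ e·‖u‖₁·‖v‖₁ for all u, v ∈ V. Let f₁,…,f_N ∈ V and let U₀,…,U_N and Ũ₀,…,Ũ_N in V satisfy U₀ = Ũ₀ and, for every n ∈ {1,…,N}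 and every v ∈ V, ⟨Uₙ − Uₙ₋₁, v⟩₀ + τ·Bₙ(Uₙ, v) = τ·⟨fₙ, v⟩₀ and ⟨Ũₙ − Ũₙ₋₁, v⟩₀ + τ·B̃ₙ(Ũₙ, v) = τ·⟨fₙ, v⟩₀. Then ‖U_N − Ũ_N‖₀² + λ·τ·∑_{n=1}^{N} ‖Uₙ − Ũₙ‖₁² ≤ (e²/λ)·τ·∑_{n=1}^{N} ‖Ũₙ‖₁². -/
/-- Abstract perturbation estimate for two implicit Euler schemes driven by nearby
coercive bilinear forms (core of Theorem 4.3). The two inner products ⟨·,·⟩₀ and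
⟨·,·⟩₁ are given as positive-definite symmetric bilinear forms `ip0`, `ip1`, with
associated norms ‖v‖ᵢ = √(ipᵢ v v), so that ‖v‖ᵢ² = ipᵢ v v. -/
theorem stmt13 {V : Type*} [AddCommGroup V] [Module ℝ V]
    (ip0 ip1 : V →ₗ[ℝ] V →ₗ[ℝ] ℝ)
    (h0symm : ∀ u v : V, ip0 u v = ip0 v u) (h0pos : ∀ v : V, 0 ≤ ip0 v v)
    (h0def : ∀ v : V, ip0 v v = 0 → v = 0)
    (h1symm : ∀ u v : V, ip1 u v = ip1 v u) (h1pos : ∀ v : V, 0 ≤ ip1 v v)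
    (h1def : ∀ v : V, ip1 v v = 0 → v = 0)
    (τ : ℝ) (hτ : 0 < τ) (N : ℕ) (hN : 1 ≤ N)
    (lam : ℝ) (hlam : 0 < lam) (e : ℝ) (he : 0 ≤ e)
    (B B' : ℕ → V →ₗ[ℝ] V →ₗ[ℝ] ℝ)
    (hcoer : ∀ n ∈ Finset.Icc 1 N, ∀ v : V, lam * ip1 v v ≤ B n v v)
    (hclose : ∀ n ∈ Finset.Icc 1 N, ∀ u v : V,
      |B n u v - B' n u v| ≤ e * Real.sqrt (ip1 u u) * Real.sqrt (ip1 v v))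
    (f : ℕ → V) (U U' : ℕ → V) (h0 : U 0 = U' 0)
    (hU : ∀ n ∈ Finset.Icc 1 N, ∀ v : V,
      ip0 (U n - U (n - 1)) v + τ * B n (U n) v = τ * ip0 (f n) v)
    (hU' : ∀ n ∈ Finset.Icc 1 N, ∀ v : V,
      ip0 (U' n - U' (n - 1)) v + τ * B' n (U' n) v = τ * ip0 (f n) v) :
    ip0 (U N - U' N) (U N - U' N)
        + lam * τ * ∑ n ∈ Finset.Icc 1 N, ip1 (U n - U' n) (U n - U' n)
      ≤ (e ^ 2 / lam) * τ * ∑ n ∈ Finset.Icc 1 N, ip1 (U' n) (U' n) := by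
  classical
  set Z : ℕ → V := fun n => U n - U' n with hZ
  have key : ∀ n ∈ Finset.Icc 1 N,
      ip0 (Z n) (Z n) - ip0 (Z (n - 1)) (Z (n - 1)) + lam * τ * ip1 (Z n) (Z n)
        ≤ (e ^ 2 / lam) * τ * ip1 (U' n) (U' n) := by
    intro n hn
    have e1 := hU n hn (Z n)
    have e2 := hU' n hn (Z n)
    have hmain : ip0 (Z n) (Z n) - ip0 (Z (n - 1)) (Z n)
        + τ * (B n (Z n) (Z n))
        = τ * (B' n (U' n) (Z n) - B n (U' n) (Z n)) := by
      simp only [hZ, map_sub, LinearMap.sub_apply] at e1 e2 ⊢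
      linarith
    have hsq : 0 ≤ ip0 (Z n - Z (n - 1)) (Z n - Z (n - 1)) := h0pos _
    have hexp : ip0 (Z n - Z (n - 1)) (Z n - Z (n - 1))
        = ip0 (Z n) (Z n) - 2 * ip0 (Z (n - 1)) (Z n) + ip0 (Z (n - 1)) (Z (n - 1)) := by
      simp only [map_sub, LinearMap.sub_apply]
      rw [h0symm (Z n) (Z (n - 1))]; ring
    have hco := hcoer n hn (Z n)
    have hcl := hclose n hn (U' n) (Z n)
    set s := Real.sqrt (ip1 (U' n) (U' n)) with hs
    set t := Real.sqrt (ip1 (Z n) (Z n)) with ht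
    have hs2 : s ^ 2 = ip1 (U' n) (U' n) := Real.sq_sqrt (h1pos _)
    have ht2 : t ^ 2 = ip1 (Z n) (Z n) := Real.sq_sqrt (h1pos _)
    have habs : -(e * s * t) ≤ B n (U' n) (Z n) - B' n (U' n) (Z n) :=
      (abs_le.mp hcl).1
    have hyoung : 2 * e * s * t ≤ lam * t ^ 2 + e ^ 2 / lam * s ^ 2 := by
      have hid : lam * t ^ 2 + e ^ 2 / lam * s ^ 2 - 2 * e * s * t
          = (lam * t - e * s) ^ 2 / lam := by
        field_simp; ring
      have hnn : 0 ≤ (lam * t - e * s) ^ 2 / lam :=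
        div_nonneg (sq_nonneg _) hlam.le
      linarith
    have hcoτ : τ * (lam * ip1 (Z n) (Z n)) ≤ τ * B n (Z n) (Z n) :=
      mul_le_mul_of_nonneg_left hco hτ.le
    have habsτ : τ * (-(e * s * t)) ≤ τ * (B n (U' n) (Z n) - B' n (U' n) (Z n)) :=
      mul_le_mul_of_nonneg_left habs hτ.le
    have hyoungτ : τ * (2 * e * s * t) ≤ τ * (lam * t ^ 2 + e ^ 2 / lam * s ^ 2) :=
      mul_le_mul_of_nonneg_left hyoung hτ.le
    rw [hs2, ht2] at hyoungτ
    linarith [hmain, hsq, hexp, hcoτ, habsτ, hyoungτ]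
  have tel : ∀ (g : ℕ → ℝ) (M : ℕ),
      ∑ n ∈ Finset.Icc 1 M, (g n - g (n - 1)) = g M - g 0 := by
    intro g M
    induction M with
    | zero => simp
    | succ M ih =>
        rw [Finset.sum_Icc_succ_top (Nat.one_le_iff_ne_zero.mpr (Nat.succ_ne_zero M)), ih]
        simp [Nat.add_sub_cancel]
  have hZ0 : ip0 (Z 0) (Z 0) = 0 := by
    simp [hZ, h0]
  have hsum := Finset.sum_le_sum key
  rw [Finset.sum_add_distrib, tel (fun n => ip0 (Z n) (Z n)) N,
    ← Finset.mul_sum, ← Finset.mul_sum] at hsum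
  simp only [hZ] at hsum hZ0
  linarith
end
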